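/- Let (A, ⟨⟨-,-⟩⟩, Φ) be a double quasi-Hamiltonian algebra over A₀ and let φ be a bracket-compatible involutive anti-automorphism of A. Then for all b ∈ A and s ∈ I: ⟨⟨φ(Φ_s), b⟩⟩ = (1/2)( φ(Φ_s) ⊗ e_s b − b φ(Φ_s) ⊗ e_s + e_s ⊗ φ(Φ_s) b − b e_s ⊗ φ(Φ_s) ). Consequently, Σ_s φ(Φ_s)⁻¹ (inverses taken in the corner algebras e_s A e_s) is again a moment map for (A, ⟨⟨-,-⟩⟩). -/
import Mathlib


open TensorProduct

noncomputable section

namespace Stmt6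

variable {A : Type*} [Ring A] [Algebra ℂ A]

/-- The flip `(c ⊗ d)^∘ = d ⊗ c` on `A ⊗[ℂ] A`. -/
def flipT : A ⊗[ℂ] A →ₗ[ℂ] A ⊗[ℂ] A := (TensorProduct.comm ℂ A A).toLinearMap

/-- The outer bimodule structure `a ⬝ (d' ⊗ d'') ⬝ b = (a d') ⊗ (d'' b)`. -/
def outerAct (a b : A) : A ⊗[ℂ] A →ₗ[ℂ] A ⊗[ℂ] A :=
  TensorProduct.map (LinearMap.mulLeft ℂ a) (LinearMap.mulRight ℂ b)

/-- The inner bimodule structure `a ∗ (d' ⊗ d'') ∗ b = (d' b) ⊗ (a d'')`. -/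
def innerAct (a b : A) : A ⊗[ℂ] A →ₗ[ℂ] A ⊗[ℂ] A :=
  TensorProduct.map (LinearMap.mulRight ℂ b) (LinearMap.mulLeft ℂ a)

/-- Axioms of a double bracket on `A`. -/
structure IsDoubleBracket (br : A →ₗ[ℂ] A →ₗ[ℂ] A ⊗[ℂ] A) : Prop where
  cyclic : ∀ a b : A, br a b = - flipT (br b a)
  right_der : ∀ a b c : A, br a (b * c) = outerAct 1 c (br a b) + outerAct b 1 (br a c)
  left_der : ∀ a b c : A, br (b * c) a = innerAct 1 c (br b a) + innerAct b 1 (br c a)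

/-- `τ₍₁₂₃₎ : (a₁ ⊗ a₂) ⊗ a₃ ↦ (a₃ ⊗ a₁) ⊗ a₂`. -/
def cyc3 : (A ⊗[ℂ] A) ⊗[ℂ] A →ₗ[ℂ] (A ⊗[ℂ] A) ⊗[ℂ] A :=
  ((TensorProduct.comm ℂ (A ⊗[ℂ] A) A).trans (TensorProduct.assoc ℂ A A A).symm).toLinearMap

/-- The left extension of a double bracket. -/
def brL (br : A →ₗ[ℂ] A →ₗ[ℂ] A ⊗[ℂ] A) (a : A) :
    A ⊗[ℂ] A →ₗ[ℂ] (A ⊗[ℂ] A) ⊗[ℂ] A :=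
  TensorProduct.map (br a) LinearMap.id

/-- The double Jacobiator of a double bracket. -/
def tripleBr (br : A →ₗ[ℂ] A →ₗ[ℂ] A ⊗[ℂ] A) (a b c : A) : (A ⊗[ℂ] A) ⊗[ℂ] A :=
  brL br a (br b c) + cyc3 (brL br b (br c a)) + cyc3 (cyc3 (brL br c (br a b)))

/-- The double bracket is Poisson: the double Jacobiator vanishes identically. -/
def IsPoisson (br : A →ₗ[ℂ] A →ₗ[ℂ] A ⊗[ℂ] A) : Prop :=
  ∀ a b c : A, tripleBr br a b c = 0

variable {I : Type*} [Fintype I] [DecidableEq I]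

/-- `(e s)` is a complete family of orthogonal idempotents. -/
def IsCompleteOrthIdem (e : I → A) : Prop :=
  (∀ s t : I, e s * e t = if s = t then e s else 0) ∧ (∑ s, e s = 1)

/-- `A₀`-linearity of a double bracket. -/
def IsA0Linear (br : A →ₗ[ℂ] A →ₗ[ℂ] A ⊗[ℂ] A) (e : I → A) : Prop :=
  ∀ (s : I) (a : A), br (e s) a = 0 ∧ br a (e s) = 0

/-- `μ` is a moment map for the double Poisson bracket. -/
def IsMomentMap (br : A →ₗ[ℂ] A →ₗ[ℂ] A ⊗[ℂ] A) (e : I → A) (μ : A) : Prop :=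
  (μ = ∑ s, e s * μ * e s) ∧
  ∀ (s : I) (a : A),
    br (e s * μ * e s) a = (a * e s) ⊗ₜ[ℂ] e s - e s ⊗ₜ[ℂ] (e s * a)

/-- `Φ` is a (multiplicative) moment map for the double quasi-Poisson bracket. -/
def IsQuasiMomentMap (br : A →ₗ[ℂ] A →ₗ[ℂ] A ⊗[ℂ] A) (e : I → A) (Φ : A) : Prop :=
  IsUnit Φ ∧ (Φ = ∑ s, e s * Φ * e s) ∧
  ∀ (s : I) (a : A),
    br (e s * Φ * e s) a = (2 : ℂ)⁻¹ • (
      (a * e s) ⊗ₜ[ℂ] (e s * Φ * e s) - e s ⊗ₜ[ℂ] (e s * Φ * e s * a)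
      + (a * (e s * Φ * e s)) ⊗ₜ[ℂ] e s - (e s * Φ * e s) ⊗ₜ[ℂ] (e s * a))

/-- `φ` is an involutive anti-automorphism of `A` fixing the idempotents. -/
def IsAntiInvolution (e : I → A) (φ : A →ₗ[ℂ] A) : Prop :=
  (∀ a b : A, φ (a * b) = φ b * φ a) ∧ (∀ a : A, φ (φ a) = a) ∧ (∀ s : I, φ (e s) = e s)

/-- Bracket-compatibility: `(φ ⊗ φ)(⟨⟨a,b⟩⟩) = ⟨⟨φ(a),φ(b)⟩⟩^∘`. -/
def IsBracketCompat (br : A →ₗ[ℂ] A →ₗ[ℂ] A ⊗[ℂ] A) (φ : A →ₗ[ℂ] A) : Prop :=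
  ∀ a b : A, TensorProduct.map φ φ (br a b) = flipT (br (φ a) (φ b))

/-- The right-hand side of the quasi-Poisson property of the double Jacobiator. -/
def qpRhs (e : I → A) (a b c : A) : (A ⊗[ℂ] A) ⊗[ℂ] A :=
  (4 : ℂ)⁻¹ • ∑ s, (
    ((c * e s * a) ⊗ₜ[ℂ] (e s * b)) ⊗ₜ[ℂ] e s
    - ((c * e s * a) ⊗ₜ[ℂ] e s) ⊗ₜ[ℂ] (b * e s)
    - ((c * e s) ⊗ₜ[ℂ] (a * e s * b)) ⊗ₜ[ℂ] e s
    + ((c * e s) ⊗ₜ[ℂ] (a * e s)) ⊗ₜ[ℂ] (b * e s)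
    - ((e s * a) ⊗ₜ[ℂ] (e s * b)) ⊗ₜ[ℂ] (e s * c)
    + ((e s * a) ⊗ₜ[ℂ] e s) ⊗ₜ[ℂ] (b * e s * c)
    + (e s ⊗ₜ[ℂ] (a * e s * b)) ⊗ₜ[ℂ] (e s * c)
    - (e s ⊗ₜ[ℂ] (a * e s)) ⊗ₜ[ℂ] (b * e s * c))

/-- The double bracket is quasi-Poisson. -/
def IsQuasiPoisson (br : A →ₗ[ℂ] A →ₗ[ℂ] A ⊗[ℂ] A) (e : I → A) : Prop :=
  ∀ a b c : A, tripleBr br a b c = qpRhs e a b c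


lemma innerAct_tmul (a b x y : A) :
    innerAct a b (x ⊗ₜ[ℂ] y) = (x * b) ⊗ₜ[ℂ] (a * y) := rfl

lemma flipT_tmul (x y : A) : flipT (x ⊗ₜ[ℂ] y) = y ⊗ₜ[ℂ] x := rfl

lemma flipT_flipT (x : A ⊗[ℂ] A) : flipT (flipT x) = x := by
  induction x using TensorProduct.induction_on with
  | zero => simp
  | tmul x y => rfl
  | add x y hx hy => rw [map_add, map_add, hx, hy]

lemma innerAct_innerAct (a b c d : A) (x : A ⊗[ℂ] A) :
    innerAct a b (innerAct c d x) = innerAct (a * c) (d * b) x := by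
  induction x using TensorProduct.induction_on with
  | zero => simp
  | tmul x y => simp [innerAct_tmul, mul_assoc]
  | add x y hx hy => simp only [map_add, hx, hy]

/-- If `(A, ⟨⟨-,-⟩⟩, Φ)` is a double quasi-Hamiltonian algebra over `A₀`
with bracket-compatible involutive anti-automorphism `φ`, then
`⟨⟨φ(Φₛ), b⟩⟩ = ½(φ(Φₛ) ⊗ eₛ b − b φ(Φₛ) ⊗ eₛ + eₛ ⊗ φ(Φₛ) b − b eₛ ⊗ φ(Φₛ))`;
consequently `∑ₛ φ(Φₛ)⁻¹` (with corner-algebra inverses) is again a moment map. -/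
theorem phi_Phi_inverse_moment_map
    (e : I → A) (he : IsCompleteOrthIdem e)
    (br : A →ₗ[ℂ] A →ₗ[ℂ] A ⊗[ℂ] A)
    (hbr : IsDoubleBracket br) (hlin : IsA0Linear br e) (hqP : IsQuasiPoisson br e)
    (Φ : A) (hΦ : IsQuasiMomentMap br e Φ)
    (φ : A →ₗ[ℂ] A) (hφ : IsAntiInvolution e φ) (hcomp : IsBracketCompat br φ) :
    (∀ (s : I) (b : A),
      br (φ (e s * Φ * e s)) b = (2 : ℂ)⁻¹ • (
        φ (e s * Φ * e s) ⊗ₜ[ℂ] (e s * b)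
        - (b * φ (e s * Φ * e s)) ⊗ₜ[ℂ] e s
        + e s ⊗ₜ[ℂ] (φ (e s * Φ * e s) * b)
        - (b * e s) ⊗ₜ[ℂ] φ (e s * Φ * e s))) ∧
    (∀ ψ : I → A,
      (∀ s : I, ψ s = e s * ψ s * e s ∧
        φ (e s * Φ * e s) * ψ s = e s ∧ ψ s * φ (e s * Φ * e s) = e s) →
      IsQuasiMomentMap br e (∑ s, ψ s)) := by
  obtain ⟨hmul, hsq, hid⟩ := hφ
  obtain ⟨hΦu, hΦsum, hΦbr⟩ := hΦ
  obtain ⟨horth, hone⟩ := he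
  have hee : ∀ s : I, e s * e s = e s := fun s => by simpa using horth s s
  -- Part 1
  have part1 : ∀ (s : I) (b : A),
      br (φ (e s * Φ * e s)) b = (2 : ℂ)⁻¹ • (
        φ (e s * Φ * e s) ⊗ₜ[ℂ] (e s * b)
        - (b * φ (e s * Φ * e s)) ⊗ₜ[ℂ] e s
        + e s ⊗ₜ[ℂ] (φ (e s * Φ * e s) * b)
        - (b * e s) ⊗ₜ[ℂ] φ (e s * Φ * e s)) := by
    intro s b
    have hc := hcomp (e s * Φ * e s) (φ b)
    rw [hsq b] at hc
    have hmain : br (φ (e s * Φ * e s)) b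
        = flipT (TensorProduct.map φ φ (br (e s * Φ * e s) (φ b))) := by
      rw [hc, flipT_flipT]
    rw [hmain, hΦbr s (φ b), map_smul, map_smul]
    congr 1
    simp only [map_sub, map_add, TensorProduct.map_tmul, flipT_tmul]
    have h1 : φ (φ b * e s) = e s * b := by rw [hmul, hid, hsq]
    have h2 : φ (e s * Φ * e s * φ b) = b * φ (e s * Φ * e s) := by
      rw [hmul, hsq]
    have h3 : φ (φ b * (e s * Φ * e s)) = φ (e s * Φ * e s) * b := by
      rw [hmul, hsq]
    have h4 : φ (e s * φ b) = b * e s := by rw [hmul, hid, hsq]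
    rw [h1, h2, h3, h4, hid s]
  refine ⟨part1, ?_⟩
  intro ψ hψ
  set M : A := ∑ s, ψ s with hM
  have hψe : ∀ s : I, ψ s * e s = ψ s := fun s => by
    conv_lhs => rw [(hψ s).1]
    rw [mul_assoc (e s * ψ s), hee, ← (hψ s).1]
  have heψ : ∀ s : I, e s * ψ s = ψ s := fun s => by
    conv_lhs => rw [(hψ s).1]
    rw [← mul_assoc, ← mul_assoc, hee, mul_assoc, ← mul_assoc, ← (hψ s).1]
  have hΨform : ∀ s : I, φ (e s * Φ * e s) = e s * (φ Φ * e s) := fun s => by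
    rw [hmul, hid, hmul, hid]
  have heΨ : ∀ s : I, e s * φ (e s * Φ * e s) = φ (e s * Φ * e s) := fun s => by
    rw [hΨform, ← mul_assoc, hee, ← hΨform]
  have hΨe : ∀ s : I, φ (e s * Φ * e s) * e s = φ (e s * Φ * e s) := fun s => by
    rw [hΨform, mul_assoc, mul_assoc, hee, ← mul_assoc, mul_assoc, ← hΨform]
  -- cross terms vanish
  have hcross : ∀ s t : I, s ≠ t → ψ s * φ (e t * Φ * e t) = 0 := by
    intro s t hst
    rw [← hψe s, ← heΨ t, mul_assoc, ← mul_assoc (e s), horth s t, if_neg hst,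
      zero_mul, mul_zero]
  have hcross2 : ∀ s t : I, s ≠ t → φ (e s * Φ * e s) * ψ t = 0 := by
    intro s t hst
    rw [← hΨe s, ← heψ t, mul_assoc, ← mul_assoc (e s), horth s t, if_neg hst,
      zero_mul, mul_zero]
  have hMΨ : M * (∑ s, φ (e s * Φ * e s)) = 1 := by
    rw [hM, Finset.sum_mul_sum]
    rw [← hone]
    rw [Finset.sum_congr rfl (fun s _ => ?_)]
    rw [Finset.sum_eq_single s (fun t _ hts => hcross s t (Ne.symm hts)) (by simp),
      (hψ s).2.2]
  have hΨM : (∑ s, φ (e s * Φ * e s)) * M = 1 := by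
    rw [hM, Finset.sum_mul_sum]
    rw [← hone]
    rw [Finset.sum_congr rfl (fun s _ => ?_)]
    rw [Finset.sum_eq_single s (fun t _ hts => hcross2 s t (Ne.symm hts)) (by simp),
      (hψ s).2.1]
  have hunit : IsUnit M := ⟨⟨M, ∑ s, φ (e s * Φ * e s), hMΨ, hΨM⟩, rfl⟩
  have hMs : ∀ s : I, e s * M * e s = ψ s := by
    intro s
    rw [hM, Finset.mul_sum, Finset.sum_mul]
    rw [Finset.sum_eq_single s (fun t _ hts => ?_) (by simp)]
    · rw [heψ, hψe]
    · rw [← heψ t, ← mul_assoc, horth s t, if_neg (Ne.symm hts),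
        zero_mul, zero_mul]
  refine ⟨hunit, ?_, ?_⟩
  · exact hM.trans (Finset.sum_congr rfl fun s _ => (hMs s).symm)
  · intro s a
    rw [hMs s]
    -- derive the bracket formula for ψ s
    set Ψ : A := φ (e s * Φ * e s) with hΨ
    have h0 : br (Ψ * ψ s) a
        = innerAct 1 (ψ s) (br Ψ a) + innerAct Ψ 1 (br (ψ s) a) :=
      hbr.left_der a Ψ (ψ s)
    rw [(hψ s).2.1, (hlin s a).1] at h0
    have h1 : innerAct Ψ 1 (br (ψ s) a) = - innerAct 1 (ψ s) (br Ψ a) :=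
      by rw [eq_neg_iff_add_eq_zero, add_comm]; exact h0.symm
    have h2 : br (ψ s) a = innerAct (e s) 1 (br (ψ s) a) := by
      have h3 : br (e s * ψ s) a
          = innerAct 1 (ψ s) (br (e s) a) + innerAct (e s) 1 (br (ψ s) a) :=
        hbr.left_der a (e s) (ψ s)
      rw [heψ s, (hlin s a).1, map_zero, zero_add] at h3
      exact h3
    have h4 : br (ψ s) a = - innerAct (ψ s) (ψ s) (br Ψ a) := by
      rw [h2, ← (hψ s).2.2, ← one_mul (1 : A), ← innerAct_innerAct, h1, map_neg,
        innerAct_innerAct, mul_one]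
    rw [h4, part1 s a, map_smul, ← smul_neg]
    congr 1
    simp only [map_sub, map_add, innerAct_tmul]
    have e1 : Ψ * ψ s = e s := (hψ s).2.1
    have e2 : ψ s * Ψ = e s := (hψ s).2.2
    have k1 : ψ s * (e s * a) = ψ s * a := by rw [← mul_assoc, hψe]
    have k2 : a * Ψ * ψ s = a * e s := by rw [mul_assoc, e1]
    have k3 : ψ s * e s = ψ s := hψe s
    have k4 : e s * ψ s = ψ s := heψ s
    have k5 : ψ s * (Ψ * a) = e s * a := by rw [← mul_assoc, e2]
    have k6 : a * e s * ψ s = a * ψ s := by rw [mul_assoc, k4]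
    rw [e1, k1, k2, k3, k4, k5, k6, e2]
    abel


end Stmt6
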